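/- arXiv:2503.22101 — 2 statements merged into one kernel-verified Lean document; each statement's English description precedes it below -/
import Mathlib

section
/- Under property (M), the new weight dominates: if positive reals w_i, w_j, w_k satisfy property (M) at i (i.e., w_i ≥ max(w_j, w_k) ≥ min(w_j, w_k) > 2, or w_i > max(w_j, w_k) ≥ min(w_j, w_k) ≥ 2), then w_i·w_k − w_j > max(w_i, w_k). -/
/-- Property (M) of a cyclic weighted triangle at the vertex whose opposite
edge has weight `a`, the other two weights being `b` and `c`. -/
def PropM (a b c : ℝ) : Prop :=
  (max b c ≤ a ∧ 2 < min b c) ∨ (max b c < a ∧ 2 ≤ min b c)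

/-! Both inequalities follow from exact decompositions of the differences,
`a * c - b - a = a * (c - 2) + (a - b)` and
`a * c - b - c = (a - 1) * (c - 2) + (a - b) + (a - 2)`, whose summands
property (M) makes nonnegative, one of them strictly positive. -/

theorem lt_mul_sub_of_le {a b c : ℝ} (ha : 0 < a) (hba : b ≤ a) (hc : 2 ≤ c)
    (hstrict : b < a ∨ 2 < c) : a < a * c - b := by
  rcases hstrict with hba' | hc'
  · nlinarith
  · nlinarith

theorem lt_mul_sub_of_two_lt {a b c : ℝ} (ha : 2 < a) (hba : b ≤ a) (hc : 2 ≤ c) :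
    c < a * c - b := by
  nlinarith

namespace PropM

variable {a b c : ℝ}

theorem snd_le_fst (h : PropM a b c) : b ≤ a := by
  rcases h with ⟨hmax, -⟩ | ⟨hmax, -⟩
  · exact (le_max_left b c).trans hmax
  · exact (le_max_left b c).trans hmax.le

theorem two_le_thd (h : PropM a b c) : 2 ≤ c := by
  rcases h with ⟨-, hmin⟩ | ⟨-, hmin⟩
  · exact hmin.le.trans (min_le_right b c)
  · exact hmin.trans (min_le_right b c)

theorem snd_lt_fst_or_two_lt_thd (h : PropM a b c) : b < a ∨ 2 < c := by
  rcases h with ⟨-, hmin⟩ | ⟨hmax, -⟩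
  · exact Or.inr (hmin.trans_le (min_le_right b c))
  · exact Or.inl ((le_max_left b c).trans_lt hmax)

theorem two_lt_fst (h : PropM a b c) : 2 < a := by
  rcases h with ⟨hmax, hmin⟩ | ⟨hmax, hmin⟩
  · exact (hmin.trans_le (min_le_max)).trans_le hmax
  · exact (hmin.trans min_le_max).trans_lt hmax

end PropM

theorem propM_new_weight_dominates_general (wi wj wk : ℝ)
    (h : PropM wi wj wk) :
    max wi wk < wi * wk - wj :=
  max_lt
    (lt_mul_sub_of_le (zero_lt_two.trans h.two_lt_fst) h.snd_le_fst h.two_le_thd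
      h.snd_lt_fst_or_two_lt_thd)
    (lt_mul_sub_of_two_lt h.two_lt_fst h.snd_le_fst h.two_le_thd)

/-- Under property (M) at `i`, the new weight after mutation at `j`
dominates: `w_i·w_k − w_j > max(w_i, w_k)`. -/
theorem propM_new_weight_dominates (wi wj wk : ℝ)
    (hwi : 0 < wi) (hwj : 0 < wj) (hwk : 0 < wk)
    (h : PropM wi wj wk) :
    max wi wk < wi * wk - wj :=
  propM_new_weight_dominates_general wi wj wk h
end

section
/- Monotonicity of d-vectors along mutation in the Markov quiver: with the setup of the Markov quiver (all exchange entries of absolute value 2 in an oriented 3-cycle) and d-vector updates d_{i_k} ↦ −d_{i_k} + max(Σ_j [b_{j,i_k}]_+ d_j, Σ_j [−b_{j,i_k}]_+ d_j) along a reduced sequence i₁, …, i_n starting from d_i = −e_i, the updated vector never decreases: for each step k ≥ 2, the new vector d_{i_k} after step k is componentwise ≥ its value before step k. -/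
/-- Matrix mutation of an integer matrix in direction `k`. -/
def mutate {n : ℕ} (B : Matrix (Fin n) (Fin n) ℤ) (k : Fin n) : Matrix (Fin n) (Fin n) ℤ :=
  Matrix.of fun i j =>
    if i = k ∨ j = k then -B i j
    else B i j + B i k * max (B k j) 0 + max (-B i k) 0 * B k j

/-- The exchange matrix of the Markov quiver: oriented 3-cycle with all
double arrows. -/
def markovB : Matrix (Fin 3) (Fin 3) ℤ := !![0, -2, 2; 2, 0, -2; -2, 2, 0]

/-- Initial d-vectors: `d_i = -e_i`. -/
def d0 : Fin 3 → Fin 3 → ℤ := fun i j => if j = i then -1 else 0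

/-- One d-vector update at direction `k`. -/
def dStep (B : Matrix (Fin 3) (Fin 3) ℤ) (d : Fin 3 → Fin 3 → ℤ) (k : Fin 3) :
    Fin 3 → Fin 3 → ℤ :=
  Function.update d k fun c =>
    -(d k c) + max (∑ i, max (B i k) 0 * d i c) (∑ i, max (-B i k) 0 * d i c)

/-- One mutation step on the pair (exchange matrix, d-vectors). -/
def step (p : Matrix (Fin 3) (Fin 3) ℤ × (Fin 3 → Fin 3 → ℤ)) (k : Fin 3) :
    Matrix (Fin 3) (Fin 3) ℤ × (Fin 3 → Fin 3 → ℤ) :=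
  (mutate p.1 k, dStep p.1 p.2 k)

/-- Running a mutation sequence from the initial Markov seed. -/
def run (l : List (Fin 3)) : Matrix (Fin 3) (Fin 3) ℤ × (Fin 3 → Fin 3 → ℤ) :=
  l.foldl step (markovB, d0)

/-!
Along a Markov sequence the exchange matrix alternates between `markovB` and `-markovB`, so the
update at `k` reads `d_k ↦ -d_k + 2 max (d_{k+1}, d_{k+2})`. The invariant is that the most
recently mutated d-vector dominates the other two componentwise: if it is `d_i` and the next
mutation is at `k ≠ i`, then `d_k ≤ d_i` gives `-d_k + 2 max (…) ≥ 2 d_i - d_k ≥ d_i ≥ d_k`,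
which is both the monotonicity claim and the invariant for the new vector.
-/

lemma mutate_markovB (k : Fin 3) : mutate markovB k = -markovB := by
  fin_cases k <;> decide

lemma mutate_neg_markovB (k : Fin 3) : mutate (-markovB) k = markovB := by
  fin_cases k <;> decide

lemma run_append_singleton (l : List (Fin 3)) (k : Fin 3) :
    run (l ++ [k]) = step (run l) k := by
  simp only [run, List.foldl_append, List.foldl_cons, List.foldl_nil]

lemma run_fst_eq (l : List (Fin 3)) : (run l).1 = markovB ∨ (run l).1 = -markovB := by
  induction l using List.reverseRecOn with
  | nil => exact .inl rfl
  | append_singleton l k ih =>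
    rw [run_append_singleton]
    rcases ih with h | h
    · exact .inr (by simp only [step, h, mutate_markovB])
    · exact .inl (by simp only [step, h, mutate_neg_markovB])

lemma dStep_of_ne (B : Matrix (Fin 3) (Fin 3) ℤ) (d : Fin 3 → Fin 3 → ℤ) {i k : Fin 3}
    (h : i ≠ k) : dStep B d k i = d i :=
  Function.update_of_ne h _ _

lemma Fin.eq_add_one_or_eq_add_two_of_ne {i k : Fin 3} (h : i ≠ k) : i = k + 1 ∨ i = k + 2 := by
  revert h; fin_cases i <;> fin_cases k <;> decide

lemma dStep_self_of_markovB {B : Matrix (Fin 3) (Fin 3) ℤ} (hB : B = markovB ∨ B = -markovB)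
    (d : Fin 3 → Fin 3 → ℤ) (k c : Fin 3) :
    dStep B d k k c = -d k c + 2 * max (d (k + 1) c) (d (k + 2) c) := by
  simp only [dStep, Function.update_self]
  rcases hB with rfl | rfl <;> fin_cases k <;>
    · simp [markovB, Fin.sum_univ_three]
      omega

lemma le_dStep_self {B : Matrix (Fin 3) (Fin 3) ℤ} (hB : B = markovB ∨ B = -markovB)
    {d : Fin 3 → Fin 3 → ℤ} {i k c : Fin 3} (hik : i ≠ k) (h : d k c ≤ d i c) :
    d i c ≤ dStep B d k k c := by
  have hi : d i c ≤ max (d (k + 1) c) (d (k + 2) c) := by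
    rcases Fin.eq_add_one_or_eq_add_two_of_ne hik with rfl | rfl
    · exact le_max_left _ _
    · exact le_max_right _ _
  rw [dStep_self_of_markovB hB]
  omega

lemma List.getLast_ne_of_isChain_ne_append {α : Type*} {l : List α} {a : α} (hl : l ≠ [])
    (h : (l ++ [a]).IsChain (· ≠ ·)) : l.getLast hl ≠ a :=
  (List.isChain_append.mp h).2.2 _ (List.getLast?_eq_some_getLast hl) a rfl

lemma run_snd_le_run_snd_getLast {l : List (Fin 3)} (hl : l ≠ []) (hred : l.IsChain (· ≠ ·))
    (i c : Fin 3) : (run l).2 i c ≤ (run l).2 (l.getLast hl) c := by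
  induction l using List.reverseRecOn generalizing i with
  | nil => exact absurd rfl hl
  | append_singleton l j ih =>
    rw [List.getLast_concat, run_append_singleton]
    rcases eq_or_ne l [] with rfl | hl'
    · -- one step from `d0` turns `d_j = -e_j` into `e_j`
      revert i c; fin_cases j <;> decide
    have hj := List.getLast_ne_of_isChain_ne_append hl' hred
    have ih := ih hl' (hred.prefix (List.prefix_append l [j]))
    have hlast := le_dStep_self (run_fst_eq l) hj (ih j)
    rcases eq_or_ne i j with rfl | hij
    · exact le_rfl
    · calc (dStep (run l).1 (run l).2 j) i c = (run l).2 i c := by rw [dStep_of_ne _ _ hij]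
        _ ≤ (run l).2 (l.getLast hl') c := ih i
        _ ≤ _ := hlast

lemma run_snd_le_dStep_self {l : List (Fin 3)} {k : Fin 3} (hl : l ≠ [])
    (hred : (l ++ [k]).IsChain (· ≠ ·)) (c : Fin 3) :
    (run l).2 k c ≤ dStep (run l).1 (run l).2 k k c := by
  have hdom := run_snd_le_run_snd_getLast hl (hred.prefix (List.prefix_append l [k]))
  exact (hdom k c).trans <|
    le_dStep_self (run_fst_eq l) (List.getLast_ne_of_isChain_ne_append hl hred) (hdom k c)

/-- Monotonicity of d-vectors along mutation in the Markov quiver: for each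
step `m + 1 ≥ 2` of a reduced sequence, the updated d-vector at the mutated
index is componentwise at least its value before the step. -/
theorem markov_dvector_monotone (l : List (Fin 3)) (hred : l.Chain' (· ≠ ·))
    (m : ℕ) (hm : m < l.length) (hm1 : 1 ≤ m) (c : Fin 3) :
    (run (l.take m)).2 (l.get ⟨m, hm⟩) c ≤
      dStep (run (l.take m)).1 (run (l.take m)).2 (l.get ⟨m, hm⟩) (l.get ⟨m, hm⟩) c := by
  have hne : l.take m ≠ [] := List.ne_nil_of_length_pos (by rw [List.length_take]; omega)
  have hred' : (l.take m ++ [l.get ⟨m, hm⟩]).IsChain (· ≠ ·) :=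
    List.take_succ_eq_append_getElem hm ▸ hred.prefix (List.take_prefix (m + 1) l)
  exact run_snd_le_dStep_self hne hred' c
end
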